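/- For every n ≥ 0, with Λ the unique formal power series root of zX² − (1 − z + z² + z³)X + z = 0, the coefficient B(z; Λⁿ, Λⁿ⁺¹; a) = −zΛⁿ(Λⁿ + Λⁿ⁺¹ − zΛⁿ⁺¹ − z²Λⁿ⁺¹ − Λⁿ⁺¹a + z²Λⁿ⁺¹a)/((Λⁿ − zΛⁿ⁺¹)(Λⁿ⁺¹ − zΛⁿ)) equals −z·𝒥(a)/((1 − zΛ)(Λ − z)), independently of n; in particular B(z; Λⁿ, Λⁿ⁺¹; a) vanishes exactly when 𝒥(a) = 1 + Λ − zΛ − z²Λ − Λa + z²Λa vanishes. -/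

import Mathlib

namespace PrudentAdsorption

/-- A point of the square lattice `ℤ²`. -/
abbrev Pt : Type := ℤ × ℤ

/-- Nearest-neighbour adjacency on the square lattice. -/
def adj (p q : Pt) : Prop := (q.1 - p.1).natAbs + (q.2 - p.2).natAbs = 1

/-- An `n`-step nearest-neighbour walk on `ℤ²` starting at the origin. -/
structure Walk (n : ℕ) where
  pts : Fin (n + 1) → Pt
  start_eq : pts 0 = (0, 0)
  adj_step : ∀ k : Fin n, adj (pts k.castSucc) (pts k.succ)

namespace Walk

variable {n : ℕ}

/-- The `x`-coordinates of the prefix of the walk up to time `k`. -/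
def xset (W : Walk n) (k : Fin (n + 1)) : Finset ℤ :=
  (Finset.Iic k).image fun m => (W.pts m).1

/-- The `y`-coordinates of the prefix of the walk up to time `k`. -/
def yset (W : Walk n) (k : Fin (n + 1)) : Finset ℤ :=
  (Finset.Iic k).image fun m => (W.pts m).2

lemma xset_nonempty (W : Walk n) (k : Fin (n + 1)) : (W.xset k).Nonempty :=
  ⟨(W.pts k).1, Finset.mem_image.2 ⟨k, Finset.mem_Iic.2 le_rfl, rfl⟩⟩

lemma yset_nonempty (W : Walk n) (k : Fin (n + 1)) : (W.yset k).Nonempty :=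
  ⟨(W.pts k).2, Finset.mem_image.2 ⟨k, Finset.mem_Iic.2 le_rfl, rfl⟩⟩

/-- Right side of the bounding box of the prefix up to time `k`. -/
def xmax (W : Walk n) (k : Fin (n + 1)) : ℤ := (W.xset k).max' (W.xset_nonempty k)

/-- Left (west) side of the bounding box of the prefix up to time `k`. -/
def xmin (W : Walk n) (k : Fin (n + 1)) : ℤ := (W.xset k).min' (W.xset_nonempty k)

/-- Top (north) side of the bounding box of the prefix up to time `k`. -/
def ymax (W : Walk n) (k : Fin (n + 1)) : ℤ := (W.yset k).max' (W.yset_nonempty k)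

/-- Bottom (south) side of the bounding box of the prefix up to time `k`. -/
def ymin (W : Walk n) (k : Fin (n + 1)) : ℤ := (W.yset k).min' (W.yset_nonempty k)

/-- Endpoint of the walk. -/
def endPt (W : Walk n) : Pt := W.pts (Fin.last n)

/-- A walk is prudent if it never takes a step towards an already visited vertex:
the half-line extending each step contains no previously visited vertex. -/
def Prudent (W : Walk n) : Prop :=
  ∀ k : Fin n, ∀ t : ℤ, 1 ≤ t → ∀ m : Fin (n + 1), m ≤ k.castSucc →
    W.pts m ≠ W.pts k.castSucc + t • (W.pts k.succ - W.pts k.castSucc)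

/-- The walk stays in the half-plane `y ≥ 0` above the impenetrable surface. -/
def HalfPlane (W : Walk n) : Prop := ∀ m : Fin (n + 1), 0 ≤ (W.pts m).2

/-- A walk is 2-sided if every prefix ends on the north or east side of
its bounding box. -/
def TwoSided (W : Walk n) : Prop :=
  ∀ k : Fin (n + 1), (W.pts k).2 = W.ymax k ∨ (W.pts k).1 = W.xmax k

/-- Every prefix ends on the north, east or west side of its bounding box. -/
def ThreeSidedEnds (W : Walk n) : Prop :=
  ∀ k : Fin (n + 1), (W.pts k).2 = W.ymax k ∨ (W.pts k).1 = W.xmax k ∨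
    (W.pts k).1 = W.xmin k

/-- The walk never steps between the SE and SW corners of its (current) bounding
box when the box has width one. -/
def NoBaseStep (W : Walk n) : Prop :=
  ∀ k : Fin n,
    ¬(W.xmax k.succ = W.xmin k.succ + 1 ∧
      (W.pts k.castSucc).2 = W.ymin k.succ ∧ (W.pts k.succ).2 = W.ymin k.succ ∧
      (((W.pts k.castSucc).1 = W.xmin k.succ ∧ (W.pts k.succ).1 = W.xmax k.succ) ∨
        ((W.pts k.castSucc).1 = W.xmax k.succ ∧ (W.pts k.succ).1 = W.xmin k.succ)))

/-- A walk is 3-sided if every prefix ends on the north, east or west side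
of its bounding box, and it never steps between the SE and SW corners of the
box when the box has width one. -/
def ThreeSided (W : Walk n) : Prop := W.ThreeSidedEnds ∧ W.NoBaseStep

/-- The number of steps of the walk lying along the surface `y = 0`. -/
def surfSteps (W : Walk n) : ℕ :=
  (Finset.univ.filter fun k : Fin n =>
    (W.pts k.castSucc).2 = 0 ∧ (W.pts k.succ).2 = 0).card

end Walk

/-- A 2-sided prudent walk above the impenetrable surface. -/
def Is2Sided {n : ℕ} (W : Walk n) : Prop := W.Prudent ∧ W.HalfPlane ∧ W.TwoSided

/-- A 3-sided prudent walk above the impenetrable surface. -/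
def Is3Sided {n : ℕ} (W : Walk n) : Prop := W.Prudent ∧ W.HalfPlane ∧ W.ThreeSided

/-- `R_{n,i,j,ν}`: number of `n`-step 2-sided prudent walks above the surface
ending on the right side of their bounding box, with `i` the distance from the
endpoint to the top of the box, `j` the height of the endpoint above the
surface and `ν` steps along the surface. -/
noncomputable def Rcount (n i j ν : ℕ) : ℕ :=
  Nat.card {W : Walk n // Is2Sided W ∧ (W.endPt).1 = W.xmax (Fin.last n) ∧
    W.ymax (Fin.last n) - (W.endPt).2 = (i : ℤ) ∧ (W.endPt).2 = (j : ℤ) ∧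
    W.surfSteps = ν}

/-- `T_{n,i,j,ν}`: number of `n`-step 2-sided prudent walks above the surface
ending on the top side of their bounding box, with `i` the distance from the
endpoint to the right of the box, `j` the height of the endpoint above the
surface and `ν` steps along the surface. -/
noncomputable def Tcount (n i j ν : ℕ) : ℕ :=
  Nat.card {W : Walk n // Is2Sided W ∧ (W.endPt).2 = W.ymax (Fin.last n) ∧
    W.xmax (Fin.last n) - (W.endPt).1 = (i : ℤ) ∧ (W.endPt).2 = (j : ℤ) ∧
    W.surfSteps = ν}

/-- `W_{n,i,j,ν}`: number of `n`-step 2-sided prudent walks above the surface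
ending a distance `i` from the NE corner of their bounding box and a distance
`j` above the surface, with `ν` steps along the surface. -/
noncomputable def Wcount (n i j ν : ℕ) : ℕ :=
  Nat.card {W : Walk n // Is2Sided W ∧
    (W.xmax (Fin.last n) - (W.endPt).1) + (W.ymax (Fin.last n) - (W.endPt).2) = (i : ℤ) ∧
    (W.endPt).2 = (j : ℤ) ∧ W.surfSteps = ν}

/-- The coefficient ring `ℤ[u,v,a]`. -/
abbrev A : Type := MvPolynomial (Fin 3) ℤ

/-- The ring of formal power series `ℤ[u,v,a][[z]]`. -/
abbrev S : Type := PowerSeries A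

/-- The series variable `z` (conjugate to the length). -/
noncomputable def zS : S := PowerSeries.X

/-- The catalytic variable `u`. -/
noncomputable def uS : S := PowerSeries.C (R := A) (MvPolynomial.X 0)

/-- The catalytic variable `v`. -/
noncomputable def vS : S := PowerSeries.C (R := A) (MvPolynomial.X 1)

/-- The surface fugacity `a`. -/
noncomputable def aS : S := PowerSeries.C (R := A) (MvPolynomial.X 2)

/-- Generating function `Σ c(n,i,j,ν) zⁿ Uⁱ Vʲ aᵛ` of a family of counts, with
the catalytic variables evaluated at power series `U`, `V`.  (Counts of `n`-step
walks vanish unless `i,j,ν ≤ n`, so the inner sums may be truncated at `n`, and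
the coefficient of `zᵐ` only receives contributions from `n ≤ m`.) -/
noncomputable def gf2 (c : ℕ → ℕ → ℕ → ℕ → ℕ) (U V : S) : S :=
  PowerSeries.mk fun m =>
    PowerSeries.coeff (R := A) m <|
      ∑ n ∈ Finset.range (m + 1), (PowerSeries.X : S) ^ n *
        ∑ i ∈ Finset.range (n + 1), ∑ j ∈ Finset.range (n + 1),
          ∑ ν ∈ Finset.range (n + 1),
            (c n i j ν : S) * U ^ i * V ^ j * aS ^ ν

/-- `R(U,V)`, the generating function of 2-sided prudent walks above the
surface ending on the right side of their bounding box. -/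
noncomputable def Rgf (U V : S) : S := gf2 Rcount U V

/-- `T(U,V)`, the generating function of 2-sided prudent walks above the
surface ending on the top side of their bounding box. -/
noncomputable def Tgf (U V : S) : S := gf2 Tcount U V

/-- `W(U,V)`, the generating function of all 2-sided prudent walks above the
surface, with `U` marking the distance from the endpoint to the NE corner. -/
noncomputable def Wgf (U V : S) : S := gf2 Wcount U V

/-- `c(v) = 1 + z² − zv + z³v`, so that the kernel quadratic is
`zX² − c(v)X + z = 0`. -/
noncomputable def ck (V : S) : S := 1 + zS ^ 2 - zS * V + zS ^ 3 * V

/-- `λ(v)`: the unique formal power series root of `zX² − c(v)X + z = 0`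
(defined as `0` if no such root exists). -/
noncomputable def lam (V : S) : S :=
  open scoped Classical in
  if h : ∃ X : S, zS * X ^ 2 - ck V * X + zS = 0 then h.choose else 0

/-- `Λ = λ(1)`. -/
noncomputable def Lam : S := lam 1

/-- Numerator of the kernel `L(u,v) = 1 − zuv(1−z²)/((u−z)(1−zu))` after
clearing the denominator `(u−z)(1−zu)`. -/
noncomputable def Ln (U V : S) : S := (U - zS) * (1 - zS * U) - zS * U * V * (1 - zS ^ 2)

/-- Numerator of the kernel `M(u,v) = 1 − zuv(1−z²)/((v−zu)(u−zv))` after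
clearing the denominator `(v−zu)(u−zv)`. -/
noncomputable def Mn (U V : S) : S := (V - zS * U) * (U - zS * V) - zS * U * V * (1 - zS ^ 2)

/-- Numerator of `A(u,v)`. -/
noncomputable def An (U V : S) : S :=
  V * (U - zS ^ 2 * U - zS * U * lam V * aS + zS ^ 2 * V * lam V * aS)

/-- Denominator of `A(u,v)`, namely `(u−zv)(v−zu)(1−zλ(v)a)`. -/
noncomputable def Ad (U V : S) : S := (U - zS * V) * (V - zS * U) * (1 - zS * lam V * aS)

/-- Numerator of `B(u,v)`. -/
noncomputable def Bn (U V : S) : S :=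
  -(zS * U) * (U + V - zS * V - zS ^ 2 * V - V * aS + zS ^ 2 * V * aS)

/-- Denominator of `B(u,v)`, namely `(u−zv)(v−zu)`. -/
noncomputable def Bd (U V : S) : S := (U - zS * V) * (V - zS * U)

/-- Numerator of `C(u,v)`. -/
noncomputable def Cn (U V : S) : S := -(zS * V) * (zS * U - U * lam V + zS * V * lam V)

/-- Denominator of `C(u,v)`, namely `(λ(v)−z)(u−zv)`. -/
noncomputable def Cd (U V : S) : S := (lam V - zS) * (U - zS * V)

/-- `𝒥(a) = 1 + Λ − zΛ − z²Λ − Λa + z²Λa`. -/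
noncomputable def Jc : S := 1 + Lam - zS * Lam - zS ^ 2 * Lam - Lam * aS + zS ^ 2 * Lam * aS

/-- Numerator of `ℋ(q)`. -/
noncomputable def Hnum (q : S) : S :=
  (1 - zS ^ 2) * (1 - Lam ^ 2) *
    (1 - zS * aS * (1 + zS) * lam (q * Lam) + zS * aS * lam (q * Lam) ^ 2)

/-- Denominator of `ℋ(q)`, including the factor `𝒥(a)`. -/
noncomputable def Hden (q : S) : S :=
  Jc * ((1 - zS * Lam) * (1 - zS * aS * lam (q * Lam)) *
    (1 - (1 - zS - zS ^ 2 + Lam) * lam (q * Lam)))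

/-- Numerator of `ℐ(q)`. -/
noncomputable def Inum (q : S) : S :=
  (Lam - zS) * (1 - zS - zS ^ 2 - aS + zS ^ 2 * aS + Lam) *
    (zS - (1 - zS * Lam) * lam (q * Lam))

/-- Denominator of `ℐ(q)`, including the factor `𝒥(a)`. -/
noncomputable def Iden (q : S) : S :=
  Jc * (zS * (1 - zS * Lam) * (1 - (1 - zS - zS ^ 2 + Lam) * lam (q * Lam)))

end PrudentAdsorption

/-!
`Bn` and `Bd` are homogeneous of degree 2 in `(U, V)`, so at `(Λⁿ, Λⁿ⁺¹) = Λⁿ • (1, Λ)` both pick up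
the factor `Λ²ⁿ`, and `Bn 1 Λ = -z 𝒥(a)`. The vanishing criterion then needs `Λ ≠ 0`, i.e. that `lam`
is not its junk value `0`: by Hensel's lemma the kernel quadratic does have a root in `S`.
-/

open PowerSeries in
theorem PowerSeries.exists_X_mul_sq_sub_mul_add_X_eq_zero {R : Type*} [CommRing R] {c : R⟦X⟧}
    (hc : IsUnit c) : ∃ x : R⟦X⟧, X * x ^ 2 - c * x + X = 0 := by
  -- Hensel's lemma for the monic `y² - c y + X²`, whose roots in `(X)` are `X x` for the roots `x`
  let f : Polynomial R⟦X⟧ := .X ^ 2 - .C c * .X + .C (X ^ 2)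
  have hf : f.Monic := by unfold f; monicity!
  obtain ⟨y, hy, hy0⟩ := HenselianRing.is_henselian (I := Ideal.span {X}) f hf 0
    (by simp [f, Ideal.mem_span_singleton, pow_two])
    (by simpa [f, Polynomial.derivative_pow] using
      (hc.map (Ideal.Quotient.mk (Ideal.span {(X : R⟦X⟧)}))).neg)
  obtain ⟨x, rfl⟩ := Ideal.mem_span_singleton'.mp (by simpa using hy0)
  refine ⟨x, X_mul_cancel (R := R) ?_⟩
  have hroot : (x * X) ^ 2 - c * (x * X) + X ^ 2 = 0 := by simpa [f] using hy
  linear_combination hroot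

namespace PrudentAdsorption

lemma zS_ne_zero : zS ≠ 0 := PowerSeries.X_ne_zero

lemma isUnit_ck (V : S) : IsUnit (ck V) := by
  rw [PowerSeries.isUnit_iff_constantCoeff]
  simp [ck, zS]

lemma lam_isRoot (V : S) : zS * lam V ^ 2 - ck V * lam V + zS = 0 := by
  have h : ∃ X : S, zS * X ^ 2 - ck V * X + zS = 0 :=
    PowerSeries.exists_X_mul_sq_sub_mul_add_X_eq_zero (isUnit_ck V)
  rw [lam, dif_pos h]
  exact h.choose_spec

lemma lam_ne_zero (V : S) : lam V ≠ 0 := by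
  intro h
  have hroot := lam_isRoot V
  rw [h] at hroot
  exact zS_ne_zero (by simpa using hroot)

lemma Bn_mul_mul (t U V : S) : Bn (t * U) (t * V) = t ^ 2 * Bn U V := by
  simp only [Bn]; ring

lemma Bd_mul_mul (t U V : S) : Bd (t * U) (t * V) = t ^ 2 * Bd U V := by
  simp only [Bd]; ring

lemma Bn_one_Lam : Bn 1 Lam = -(zS * Jc) := by
  simp only [Bn, Jc]; ring

lemma Bd_one_Lam : Bd 1 Lam = (1 - zS * Lam) * (Lam - zS) := by
  simp only [Bd]; ring

/-- For every `n ≥ 0`, the coefficient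
`B(z;Λⁿ,Λⁿ⁺¹;a) = −zΛⁿ(Λⁿ + Λⁿ⁺¹ − zΛⁿ⁺¹ − z²Λⁿ⁺¹ − Λⁿ⁺¹a + z²Λⁿ⁺¹a)
/((Λⁿ−zΛⁿ⁺¹)(Λⁿ⁺¹−zΛⁿ))` equals `−z·𝒥(a)/((1−zΛ)(Λ−z))`, independently of `n`
(stated after clearing the denominators); in particular its numerator
`Bn(Λⁿ,Λⁿ⁺¹)` vanishes exactly when `𝒥(a) = 1+Λ−zΛ−z²Λ−Λa+z²Λa` vanishes. -/
theorem B_at_lambda_iterates (n : ℕ) :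
    Bn (Lam ^ n) (Lam ^ (n + 1)) * ((1 - zS * Lam) * (Lam - zS))
      = -(zS * Jc) * Bd (Lam ^ n) (Lam ^ (n + 1)) ∧
    (Bn (Lam ^ n) (Lam ^ (n + 1)) = 0 ↔ Jc = 0) := by
  rw [← mul_one (Lam ^ n), pow_succ, Bn_mul_mul, Bd_mul_mul, Bn_one_Lam, Bd_one_Lam]
  refine ⟨by ring, ?_⟩
  simp [zS_ne_zero, lam_ne_zero, Lam]

end PrudentAdsorption
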